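/- Let 𝓗 be a hypergraph, let e ∈ E(𝓗), and let 𝓗' be the hypergraph obtained from 𝓗 by adding a new vertex v' ∉ V(𝓗) and replacing the hyperedge e by e ∪ {v'}. Then the adaptive width does not increase: aw(𝓗') ≤ aw(𝓗). -/

import Mathlib

/-!
The restriction of a fractional independent set `μ` of `𝓗'` to `V(𝓗)` is a fractional
independent set of `𝓗`. A tree decomposition of `𝓗` becomes one of `𝓗'` by attaching a
new leaf with bag `e ∪ {v'}` to a node whose bag contains `e`; the old bags avoid `v'`, and
the new bag has `μ`-weight at most `1` because it is a hyperedge of `𝓗'`. So the `μ`-width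
of `𝓗'` is at most the maximum of `aw(𝓗)` and `1`, and `aw(𝓗) ≥ 1` (weight `1` on a single
vertex).
-/

noncomputable section

/-! ### Hypergraphs -/

/-- A hypergraph: a vertex set together with a set of nonempty hyperedges. -/
structure Hgraph (V : Type) where
  verts : Set V
  edges : Set (Set V)
  edge_nonempty : ∀ e ∈ edges, e.Nonempty
  edge_subset : ∀ e ∈ edges, e ⊆ verts

namespace Hgraph

variable {V : Type}

/-- An independent set: no two of its vertices lie in a common hyperedge. -/
def IsIndepSet (H : Hgraph V) (I : Set V) : Prop :=
  I ⊆ H.verts ∧ ∀ u ∈ I, ∀ v ∈ I, u ≠ v → ∀ e ∈ H.edges, ¬(u ∈ e ∧ v ∈ e)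

/-- The independence number `α`. -/
def indepNum (H : Hgraph V) : ℕ :=
  sSup {n | ∃ I : Set V, H.IsIndepSet I ∧ I.ncard = n}

/-- A fractional independent set: `μ : V(H) → [0,1]` with `∑_{v ∈ e} μ v ≤ 1` for each edge. -/
def IsFracIndep (H : Hgraph V) (μ : V → ℝ) : Prop :=
  (∀ v, 0 ≤ μ v ∧ μ v ≤ 1) ∧ (∀ v, v ∉ H.verts → μ v = 0) ∧
    ∀ e ∈ H.edges, (∑ᶠ v ∈ e, μ v) ≤ 1

/-- The weight of a (fractional independent) vertex-weighting. -/
def weight (H : Hgraph V) (μ : V → ℝ) : ℝ := ∑ᶠ v ∈ H.verts, μ v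

/-- The fractional independence number `α*`. -/
def fracIndepNum (H : Hgraph V) : ℝ :=
  sSup {w | ∃ μ : V → ℝ, H.IsFracIndep μ ∧ H.weight μ = w}

/-- A fractional edge cover of a set `X` of vertices. -/
def IsFracEdgeCover (H : Hgraph V) (X : Set V) (γ : Set V → ℝ) : Prop :=
  (∀ e, 0 ≤ γ e) ∧ (∀ e, e ∉ H.edges → γ e = 0) ∧
    ∀ v ∈ X, 1 ≤ ∑ᶠ e ∈ {e ∈ H.edges | v ∈ e}, γ e

/-- The weight of an edge-weighting. -/
def coverWeight (H : Hgraph V) (γ : Set V → ℝ) : ℝ := ∑ᶠ e ∈ H.edges, γ e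

/-- `ρ*_H(X)`: the fractional edge cover number of a set `X` of vertices. -/
def fracCoverOf (H : Hgraph V) (X : Set V) : ℝ :=
  sInf {w | ∃ γ : Set V → ℝ, H.IsFracEdgeCover X γ ∧ H.coverWeight γ = w}

/-- The fractional edge cover number `ρ*(H)`. -/
def fracEdgeCoverNum (H : Hgraph V) : ℝ := H.fracCoverOf H.verts

/-- A tree decomposition of a hypergraph. -/
structure TreeDecomp (H : Hgraph V) where
  n : ℕ
  tree : SimpleGraph (Fin n)
  isTree : tree.IsTree
  bag : Fin n → Set V
  bag_subset : ∀ t, bag t ⊆ H.verts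
  verts_covered : ∀ v ∈ H.verts, ∃ t, v ∈ bag t
  edges_covered : ∀ e ∈ H.edges, ∃ t, e ⊆ bag t
  bags_connected : ∀ (v : V) (t₁ t₂ : Fin n) (h₁ : v ∈ bag t₁) (h₂ : v ∈ bag t₂),
    (tree.induce {t | v ∈ bag t}).Reachable ⟨t₁, h₁⟩ ⟨t₂, h₂⟩

/-- The `μ`-width of a tree decomposition: the maximum `μ`-weight of a bag. -/
def TreeDecomp.muWidth {H : Hgraph V} (td : H.TreeDecomp) (μ : V → ℝ) : ℝ :=
  ⨆ t, ∑ᶠ v ∈ td.bag t, μ v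

/-- The `μ`-width of a hypergraph: minimum `μ`-width over tree decompositions. -/
def muWidth (H : Hgraph V) (μ : V → ℝ) : ℝ :=
  sInf {w | ∃ td : H.TreeDecomp, td.muWidth μ = w}

/-- The adaptive width `aw(H)`: supremum of the `μ`-widths over fractional
independent sets `μ`. -/
def adaptiveWidth (H : Hgraph V) : ℝ :=
  sSup {w | ∃ μ : V → ℝ, H.IsFracIndep μ ∧ H.muWidth μ = w}

/-- The fractional hypertreewidth `fhtw(H)`. -/
def fhtw (H : Hgraph V) : ℝ :=
  sInf {w | ∃ td : H.TreeDecomp, (⨆ t, H.fracCoverOf (td.bag t)) = w}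

/-- Add a new vertex `v'` to the hypergraph and replace the hyperedge `e` by `e ∪ {v'}`. -/
def extendEdge (H : Hgraph V) (e : Set V) (he : e ∈ H.edges) (v' : V) :
    Hgraph V where
  verts := insert v' H.verts
  edges := (H.edges \ {e}) ∪ {insert v' e}
  edge_nonempty := by
    rintro f (⟨hf, -⟩ | hf)
    · exact H.edge_nonempty f hf
    · rw [Set.mem_singleton_iff] at hf; subst hf; exact ⟨v', Set.mem_insert _ _⟩
  edge_subset := by
    rintro f (⟨hf, -⟩ | hf)
    · exact (H.edge_subset f hf).trans (Set.subset_insert _ _)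
    · rw [Set.mem_singleton_iff] at hf; subst hf
      exact Set.insert_subset_insert (H.edge_subset e he)

end Hgraph

/-! ### Digraphs -/

namespace Digraph

variable {V A B : Type}

/-- `u` reaches `v` by a directed path (possibly of length 0). -/
def Reaches (G : Digraph V) (u v : V) : Prop := Relation.ReflTransGen G.Adj u v

/-- `R(u)`: the set of vertices reachable from `u` (including `u`). -/
def reachSet (G : Digraph V) (u : V) : Set V := {v | G.Reaches u v}

/-- The setoid whose classes are the strongly connected components. -/
def sccSetoid (G : Digraph V) : Setoid V where
  r u v := G.Reaches u v ∧ G.Reaches v u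
  iseqv := ⟨fun _ => ⟨.refl, .refl⟩, fun h => ⟨h.2, h.1⟩,
    fun h₁ h₂ => ⟨h₁.1.trans h₂.1, h₂.2.trans h₁.2⟩⟩

/-- The condensation `H/∼`: the loop-free DAG obtained by contracting each strongly
connected component to a single vertex. -/
def cond (G : Digraph V) : Digraph (Quotient G.sccSetoid) where
  Adj X Y := X ≠ Y ∧ ∃ a b, Quotient.mk G.sccSetoid a = X ∧
    Quotient.mk G.sccSetoid b = Y ∧ G.Adj a b

/-- `v` lies in a source component: its strongly connected component is not
reachable from any other component. -/
def InSourceComp (G : Digraph V) (v : V) : Prop := ∀ u, G.Reaches u v → G.Reaches v u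

/-- `v` is a source: a vertex of in-degree `0`. -/
def IsSrc (G : Digraph V) (v : V) : Prop := ∀ u, ¬ G.Adj u v

/-- The reachability hypergraph `R(H)` of a digraph: vertices `V(H)`, one hyperedge
`R(s)` for each (representative `s` of a) source component. -/
def reachHyp (G : Digraph V) : Hgraph V where
  verts := Set.univ
  edges := {e | ∃ s, G.InSourceComp s ∧ e = G.reachSet s}
  edge_nonempty := by rintro e ⟨s, -, rfl⟩; exact ⟨s, Relation.ReflTransGen.refl⟩
  edge_subset := fun e _ => Set.subset_univ e

/-- The contour `Γ(H)` of a digraph: the reachability hypergraph with all vertices of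
source components deleted (empty hyperedges discarded). -/
def contour (G : Digraph V) : Hgraph V where
  verts := {v | ¬ G.InSourceComp v}
  edges := {e | (∃ s, G.InSourceComp s ∧
    e = G.reachSet s \ {v | G.InSourceComp v}) ∧ e.Nonempty}
  edge_nonempty := fun _ he => he.2
  edge_subset := by rintro e ⟨⟨s, -, rfl⟩, -⟩ v hv; exact hv.2

/-- The reachability hypergraph of a DAG: one hyperedge `R(s)` for each in-degree `0`
vertex `s`. -/
def dagReachHyp (G : Digraph V) : Hgraph V where
  verts := Set.univ
  edges := {e | ∃ s, G.IsSrc s ∧ e = G.reachSet s}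
  edge_nonempty := by rintro e ⟨s, -, rfl⟩; exact ⟨s, Relation.ReflTransGen.refl⟩
  edge_subset := fun e _ => Set.subset_univ e

/-- The contour of a DAG: the reachability hypergraph with all sources deleted. -/
def dagContour (G : Digraph V) : Hgraph V where
  verts := {v | ¬ G.IsSrc v}
  edges := {e | (∃ s, G.IsSrc s ∧ e = G.reachSet s \ {v | G.IsSrc v}) ∧ e.Nonempty}
  edge_nonempty := fun _ he => he.2
  edge_subset := by rintro e ⟨⟨s, -, rfl⟩, -⟩ v hv; exact hv.2

/-- A homomorphism of digraphs: a map preserving arcs. -/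
def IsHom (H : Digraph A) (G : Digraph B) (φ : A → B) : Prop :=
  ∀ ⦃u v⦄, H.Adj u v → G.Adj (φ u) (φ v)

/-- The tensor product of digraphs. -/
def tensor (G : Digraph A) (F : Digraph B) : Digraph (A × B) where
  Adj x y := G.Adj x.1 y.1 ∧ F.Adj x.2 y.2

/-- The induced subdigraph on a set of vertices. -/
def induce (G : Digraph A) (S : Set A) : Digraph S where
  Adj a b := G.Adj a.1 b.1

/-- The quotient digraph `H/σ` of a digraph by a partition (setoid) of its vertices. -/
def quot (H : Digraph A) (σ : Setoid A) : Digraph (Quotient σ) where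
  Adj X Y := ∃ a b, Quotient.mk σ a = X ∧ Quotient.mk σ b = Y ∧ H.Adj a b

/-- A loop-free digraph. -/
def LoopFree (H : Digraph A) : Prop := ∀ v, ¬ H.Adj v v

/-- A digraph without directed cycles (in particular, without loops). -/
def IsAcyclic (H : Digraph A) : Prop := ∀ u v, H.Adj u v → ¬ H.Reaches v u

/-- A canonical DAG: a DAG in which every vertex has in-degree 0 or out-degree 0. -/
def IsCanonicalDAG (H : Digraph A) : Prop :=
  H.IsAcyclic ∧ ∀ v, (∀ u, ¬ H.Adj u v) ∨ (∀ u, ¬ H.Adj v u)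

/-- `t` lies in a sink component: from its strongly connected component no other
component is reachable. -/
def IsSinkVert (H : Digraph A) (t : A) : Prop := ∀ v, H.Reaches t v → H.Reaches v t

/-- Sink deletion: delete all vertices of the strongly connected component of `t`. -/
def sinkDelete (H : Digraph A) (t : A) :
    Digraph {v : A // ¬ (H.Reaches v t ∧ H.Reaches t v)} where
  Adj a b := H.Adj a.1 b.1

/-- Loop deletion: delete the loop at `u`. -/
def deleteLoop (H : Digraph A) (u : A) : Digraph A where
  Adj a b := H.Adj a b ∧ ¬(a = u ∧ b = u)

/-- The number of sources (in-degree `0` vertices) of the condensation `H/∼`. -/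
def numSources (H : Digraph A) : ℕ :=
  {X : Quotient H.sccSetoid | ∀ Y, ¬ H.cond.Adj Y X}.ncard

end Digraph

/-- The number of homomorphisms from `H` to `G`. -/
def homCount {A B : Type} (H : Digraph A) (G : Digraph B) : ℕ :=
  Nat.card {φ : A → B // H.IsHom G φ}

/-- Two digraphs are isomorphic: a bijection of the vertex sets preserving arcs in
both directions. -/
def DigraphIso {A B : Type} (H : Digraph A) (G : Digraph B) : Prop :=
  ∃ e : A ≃ B, ∀ u v, H.Adj u v ↔ G.Adj (e u) (e v)

/-- The number of subgraphs of `G` (pairs of a vertex subset and an arc subset of `G`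
among those vertices) that are isomorphic to `H`. -/
def subCount {A B : Type} (H : Digraph A) (G : Digraph B) : ℕ :=
  Nat.card {p : Set B × (B → B → Prop) //
    (∀ a b, p.2 a b → a ∈ p.1 ∧ b ∈ p.1 ∧ G.Adj a b) ∧
    DigraphIso H (Digraph.mk fun (a b : p.1) => p.2 a b)}

/-- The number of vertex subsets of `G` inducing a subgraph isomorphic to `H`. -/
def indSubCount {A B : Type} (H : Digraph A) (G : Digraph B) : ℕ :=
  Nat.card {S : Set B // DigraphIso H (G.induce S)}

/-- `H'` is an arc supergraph of the loop-free digraph `H`: a loop-free digraph on the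
same vertex set whose arc set contains that of `H`. -/
def ArcSupergraph {A : Type} (H H' : Digraph A) : Prop :=
  H'.LoopFree ∧ ∀ u v, H.Adj u v → H'.Adj u v

/-- The setoid identifying exactly `u` and `v`. -/
def pairSetoid {A : Type} (u v : A) : Setoid A where
  r a b := a = b ∨ (a ∈ ({u, v} : Set A) ∧ b ∈ ({u, v} : Set A))
  iseqv := by
    refine ⟨fun _ => Or.inl rfl, ?_, ?_⟩
    · rintro a b (rfl | ⟨h₁, h₂⟩)
      · exact Or.inl rfl
      · exact Or.inr ⟨h₂, h₁⟩
    · rintro a b c (rfl | ⟨h₁, h₂⟩) h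
      · exact h
      · rcases h with rfl | ⟨h₃, h₄⟩
        · exact Or.inr ⟨h₁, h₂⟩
        · exact Or.inr ⟨h₁, h₄⟩

/-- Arc contraction: identify the endpoints of the arc `(u,v)`; arcs between `u` and
`v` do not yield a loop. -/
def Digraph.contractArc {A : Type} (H : Digraph A) (u v : A) :
    Digraph (Quotient (pairSetoid u v)) where
  Adj X Y := ∃ a b, Quotient.mk (pairSetoid u v) a = X ∧ Quotient.mk (pairSetoid u v) b = Y ∧
    H.Adj a b ∧ ¬(a ≠ b ∧ a ∈ ({u, v} : Set A) ∧ b ∈ ({u, v} : Set A))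

/-- `MRMinor M H`: `M` is a monotone reversible minor of `H`, i.e. `M` can be
obtained (up to isomorphism) from `H` by a finite sequence of sink deletions,
arc contractions, and loop deletions. -/
inductive MRMinor : ∀ {A : Type}, Digraph A → ∀ {B : Type}, Digraph B → Prop
  | of_iso {A B : Type} {M : Digraph A} {H : Digraph B} :
      DigraphIso M H → MRMinor M H
  | sink_del {A B : Type} {M : Digraph A} {H : Digraph B} (t : B) :
      H.IsSinkVert t → MRMinor M (H.sinkDelete t) → MRMinor M H
  | contract {A B : Type} {M : Digraph A} {H : Digraph B} (u v : B) :
      H.Adj u v → MRMinor M (H.contractArc u v) → MRMinor M H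
  | loop_del {A B : Type} {M : Digraph A} {H : Digraph B} (u : B) :
      H.Adj u u → MRMinor M (H.deleteLoop u) → MRMinor M H

/-- `SinkDelSeq H F`: `F` is obtained from `H` by a finite sequence of sink deletions. -/
inductive SinkDelSeq : ∀ {A : Type}, Digraph A → ∀ {B : Type}, Digraph B → Prop
  | refl {A : Type} (H : Digraph A) : SinkDelSeq H H
  | step {A : Type} {H : Digraph A} (t : A) {B : Type} {F : Digraph B} :
      H.IsSinkVert t → SinkDelSeq (H.sinkDelete t) F → SinkDelSeq H F

/-- The directed split of an undirected graph `F`: vertices `V(F) ⊕ E(F)`, with arcs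
from each edge `e = {u,v}` to `u` and to `v`. -/
def dsplit {α : Type} (F : SimpleGraph α) : Digraph (α ⊕ F.edgeSet) where
  Adj x y :=
    match x, y with
    | Sum.inr e, Sum.inl u => u ∈ e.1
    | _, _ => False

/-- `D` has an induced matching gadget of size `k`: arcs `(s i, w i)` with the `w i`
pairwise distinct such that no source of `D` reaches two distinct `w i`. -/
def HasIMG {A : Type} (D : Digraph A) (k : ℕ) : Prop :=
  ∃ s w : Fin k → A, (∀ i, D.Adj (s i) (w i)) ∧ Function.Injective w ∧
    ∀ x, D.IsSrc x → ∀ i j, D.Reaches x (w i) → D.Reaches x (w j) → i = j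

/-- The maximum size of an induced matching gadget of `D`. -/
def imgNum {A : Type} (D : Digraph A) : ℕ := sSup {k | HasIMG D k}

/-- A fractional cover of a DAG `D`: nonnegative weights on the sources such that each
non-source is covered with total weight at least 1; the total weight is at least 1. -/
def Digraph.IsFracCover {A : Type} (D : Digraph A) (ψ : A → ℝ) : Prop :=
  (∀ s, 0 ≤ ψ s) ∧ (∀ s, ¬ D.IsSrc s → ψ s = 0) ∧
    (∀ v, ¬ D.IsSrc v → 1 ≤ ∑ᶠ s ∈ {s | D.IsSrc s ∧ v ∈ D.reachSet s}, ψ s) ∧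
    1 ≤ ∑ᶠ s ∈ {s | D.IsSrc s}, ψ s

/-- The fractional cover number of a DAG: the minimum weight of a fractional cover. -/
def Digraph.dagFracCoverNum {A : Type} (D : Digraph A) : ℝ :=
  sInf {w | ∃ ψ : A → ℝ, D.IsFracCover ψ ∧ (∑ᶠ s ∈ {s | D.IsSrc s}, ψ s) = w}

/-- The fractional cover number `ρ*(H)` of a digraph: the fractional cover number of
its condensation. -/
def Digraph.fracCoverNum {A : Type} (G : Digraph A) : ℝ := G.cond.dagFracCoverNum

namespace SimpleGraph

variable {n : ℕ}

def addLeaf (T : SimpleGraph (Fin n)) (t₀ : Fin n) : SimpleGraph (Fin (n + 1)) :=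
  T.map Fin.castSuccEmb ⊔ edge (Fin.last n) t₀.castSucc

variable {T : SimpleGraph (Fin n)}

lemma addLeaf_adj_castSucc (t₀ : Fin n) {a b : Fin n} (h : T.Adj a b) :
    (T.addLeaf t₀).Adj a.castSucc b.castSucc :=
  Or.inl (map_adj_apply.2 h)

lemma addLeaf_adj_last (t₀ : Fin n) : (T.addLeaf t₀).Adj (Fin.last n) t₀.castSucc :=
  Or.inr ((edge_adj ..).2 ⟨Or.inl ⟨rfl, rfl⟩, (Fin.castSucc_lt_last t₀).ne'⟩)

lemma card_edgeSet_addLeaf (t₀ : Fin n) :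
    Nat.card (T.addLeaf t₀).edgeSet = Nat.card T.edgeSet + 1 := by
  have hedge : (edge (Fin.last n) t₀.castSucc).edgeSet = {s(Fin.last n, t₀.castSucc)} := by
    simp [(Fin.castSucc_lt_last t₀).ne']
  have hnew : s(Fin.last n, t₀.castSucc) ∉ Fin.castSuccEmb.sym2Map '' T.edgeSet := by
    rintro ⟨e, -, he⟩
    induction e with
    | h a b => simp [Fin.castSucc_ne_last] at he
  rw [addLeaf, edgeSet_sup, edgeSet_map, hedge, Set.union_singleton, Nat.card_coe_set_eq,
    Set.ncard_insert_of_notMem hnew,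
    Set.ncard_image_of_injective _ (Function.Embedding.injective _), Nat.card_coe_set_eq]

lemma IsTree.addLeaf (hT : T.IsTree) (t₀ : Fin n) : (T.addLeaf t₀).IsTree := by
  rw [isTree_iff_connected_and_card, Nat.card_fin] at hT ⊢
  refine ⟨(connected_iff_exists_forall_reachable _).2 ⟨t₀.castSucc, fun w => ?_⟩, ?_⟩
  · induction w using Fin.lastCases with
    | last => exact (addLeaf_adj_last t₀).reachable.symm
    | cast a => exact (hT.1.preconnected t₀ a).map ⟨Fin.castSucc, addLeaf_adj_castSucc t₀⟩
  · rw [card_edgeSet_addLeaf, hT.2]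

end SimpleGraph

lemma finsum_mem_le_finsum_mem_of_subset {α M : Type*} [AddCommMonoid M] [PartialOrder M]
    [IsOrderedAddMonoid M] {f : α → M} (hf : ∀ a, 0 ≤ f a) {s t : Set α} (hst : s ⊆ t)
    (ht : t.Finite) : ∑ᶠ a ∈ s, f a ≤ ∑ᶠ a ∈ t, f a := by
  rw [← finsum_mem_add_sdiff hst ht]
  exact le_add_of_nonneg_right (finsum_nonneg fun a => finsum_nonneg fun _ => hf a)

lemma finsum_mem_le_ncard {α : Type*} {f : α → ℝ} {s : Set α} (hs : s.Finite)
    (hf : ∀ a ∈ s, f a ≤ 1) : ∑ᶠ a ∈ s, f a ≤ s.ncard := by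
  rw [finsum_mem_eq_finite_toFinset_sum f hs, Set.ncard_eq_toFinset_card s hs]
  simpa using Finset.sum_le_card_nsmul _ _ 1 fun a ha => hf a (hs.mem_toFinset.1 ha)

namespace Hgraph

variable {V : Type} {H : Hgraph V} {μ ν : V → ℝ}

namespace TreeDecomp

lemma sum_bag_le_muWidth (td : H.TreeDecomp) (μ : V → ℝ) (t : Fin td.n) :
    ∑ᶠ v ∈ td.bag t, μ v ≤ td.muWidth μ :=
  le_ciSup (f := fun t => ∑ᶠ v ∈ td.bag t, μ v) (Set.finite_range _).bddAbove t

lemma muWidth_le_of_forall (td : H.TreeDecomp) {c : ℝ}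
    (h : ∀ t, ∑ᶠ v ∈ td.bag t, μ v ≤ c) : td.muWidth μ ≤ c :=
  have := td.isTree.connected.nonempty
  ciSup_le h

lemma muWidth_nonneg (td : H.TreeDecomp) (hμ : ∀ v, 0 ≤ μ v) : 0 ≤ td.muWidth μ :=
  Real.iSup_nonneg fun _ => finsum_nonneg fun v => finsum_nonneg fun _ => hμ v

lemma muWidth_congr (td : H.TreeDecomp) (h : Set.EqOn μ ν H.verts) :
    td.muWidth μ = td.muWidth ν :=
  iSup_congr fun t => finsum_mem_congr rfl fun _ hv => h (td.bag_subset t hv)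

variable (H) in
def oneBag : H.TreeDecomp where
  n := 1
  tree := ⊥
  isTree := .of_subsingleton
  bag _ := H.verts
  bag_subset _ := subset_rfl
  verts_covered _ hv := ⟨0, hv⟩
  edges_covered f hf := ⟨0, H.edge_subset f hf⟩
  bags_connected _ t₁ t₂ _ _ := by
    obtain rfl := Subsingleton.elim t₁ t₂
    rfl

instance : Nonempty H.TreeDecomp := ⟨oneBag H⟩

lemma reachable_induce_snoc (td : H.TreeDecomp) {t₀ : Fin td.n} {B : Set V}
    (hsep : B ∩ H.verts ⊆ td.bag t₀) (v : V) (t₁ t₂ : Fin (td.n + 1))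
    (h₁ : v ∈ Fin.snoc (α := fun _ => Set V) td.bag B t₁)
    (h₂ : v ∈ Fin.snoc (α := fun _ => Set V) td.bag B t₂) :
    ((td.tree.addLeaf t₀).induce {t | v ∈ Fin.snoc (α := fun _ => Set V) td.bag B t}).Reachable
      ⟨t₁, h₁⟩ ⟨t₂, h₂⟩ := by
  set S := {t | v ∈ Fin.snoc (α := fun _ => Set V) td.bag B t}
  have mem_castSucc {a : Fin td.n} (ha : v ∈ td.bag a) : a.castSucc ∈ S := by
    simpa [S] using ha
  let lift : (td.tree.induce {t | v ∈ td.bag t}) →g ((td.tree.addLeaf t₀).induce S) :=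
    ⟨fun a => ⟨a.1.castSucc, mem_castSucc a.2⟩, SimpleGraph.addLeaf_adj_castSucc t₀⟩
  by_cases hv : v ∈ H.verts
  · obtain ⟨c, hc⟩ := td.verts_covered v hv
    suffices h : ∀ t (ht : t ∈ S), ((td.tree.addLeaf t₀).induce S).Reachable ⟨t, ht⟩
        ⟨c.castSucc, mem_castSucc hc⟩ from (h t₁ h₁).trans (h t₂ h₂).symm
    intro t ht
    induction t using Fin.lastCases with
    | last =>
      have hvt₀ : v ∈ td.bag t₀ := hsep ⟨by simpa [S] using ht, hv⟩
      have hadj : ((td.tree.addLeaf t₀).induce S).Adj ⟨_, ht⟩ ⟨_, mem_castSucc hvt₀⟩ :=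
        SimpleGraph.addLeaf_adj_last t₀
      exact hadj.reachable.trans ((td.bags_connected v t₀ c hvt₀ hc).map lift)
    | cast a => exact (td.bags_connected v a c (by simpa [S] using ht) hc).map lift
  · have hlast : ∀ t ∈ S, t = Fin.last td.n := by
      intro t ht
      induction t using Fin.lastCases with
      | last => rfl
      | cast a => exact absurd (td.bag_subset a (by simpa [S] using ht)) hv
    obtain rfl : t₁ = t₂ := (hlast t₁ h₁).trans (hlast t₂ h₂).symm
    rfl

def attachLeaf (td : H.TreeDecomp) {H' : Hgraph V} (t₀ : Fin td.n) (B : Set V)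
    (hverts : H'.verts = H.verts ∪ B) (hedges : ∀ f ∈ H'.edges, f ∈ H.edges ∨ f ⊆ B)
    (hsep : B ∩ H.verts ⊆ td.bag t₀) : H'.TreeDecomp where
  n := td.n + 1
  tree := td.tree.addLeaf t₀
  isTree := td.isTree.addLeaf t₀
  bag := Fin.snoc (α := fun _ => Set V) td.bag B
  bag_subset t := by
    rw [hverts]
    induction t using Fin.lastCases with
    | last => simp
    | cast a => simpa using (td.bag_subset a).trans Set.subset_union_left
  verts_covered v hv := by
    rw [hverts] at hv
    rcases hv with hv | hv
    · obtain ⟨t, ht⟩ := td.verts_covered v hv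
      exact ⟨t.castSucc, by simpa using ht⟩
    · exact ⟨Fin.last _, by simpa using hv⟩
  edges_covered f hf := by
    rcases hedges f hf with hf | hf
    · obtain ⟨t, ht⟩ := td.edges_covered f hf
      exact ⟨t.castSucc, by simpa using ht⟩
    · exact ⟨Fin.last _, by simpa using hf⟩
  bags_connected := td.reachable_induce_snoc hsep

lemma muWidth_attachLeaf_le (td : H.TreeDecomp) {H' : Hgraph V} (t₀ : Fin td.n) (B : Set V)
    (hverts : H'.verts = H.verts ∪ B) (hedges : ∀ f ∈ H'.edges, f ∈ H.edges ∨ f ⊆ B)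
    (hsep : B ∩ H.verts ⊆ td.bag t₀) (μ : V → ℝ) :
    (td.attachLeaf t₀ B hverts hedges hsep).muWidth μ ≤
      max (td.muWidth μ) (∑ᶠ v ∈ B, μ v) := by
  refine muWidth_le_of_forall _ fun t => ?_
  induction t using Fin.lastCases with
  | last => simp [attachLeaf]
  | cast a => simpa [attachLeaf] using le_max_of_le_left (td.sum_bag_le_muWidth μ a)

end TreeDecomp

lemma muWidth_le (hμ : ∀ v, 0 ≤ μ v) (td : H.TreeDecomp) : H.muWidth μ ≤ td.muWidth μ :=
  csInf_le ⟨0, by rintro _ ⟨td, rfl⟩; exact td.muWidth_nonneg hμ⟩ ⟨td, rfl⟩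

lemma exists_muWidth_lt {c : ℝ} (h : H.muWidth μ < c) :
    ∃ td : H.TreeDecomp, td.muWidth μ < c := by
  obtain ⟨_, ⟨td, rfl⟩, htd⟩ := exists_lt_of_csInf_lt
    (s := {w | ∃ td : H.TreeDecomp, td.muWidth μ = w}) ⟨_, Classical.arbitrary _, rfl⟩ h
  exact ⟨td, htd⟩

lemma le_muWidth {c : ℝ} (h : ∀ td : H.TreeDecomp, c ≤ td.muWidth μ) : c ≤ H.muWidth μ :=
  le_csInf ⟨_, Classical.arbitrary H.TreeDecomp, rfl⟩ (by rintro _ ⟨td, rfl⟩; exact h td)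

lemma muWidth_congr (h : Set.EqOn μ ν H.verts) : H.muWidth μ = H.muWidth ν := by
  simp only [muWidth, TreeDecomp.muWidth_congr _ h]

section Finite

variable [Finite V]

lemma IsFracIndep.indicator_verts {H' : Hgraph V} (hμ : H'.IsFracIndep μ)
    (hedges : ∀ f ∈ H.edges, ∃ f' ∈ H'.edges, f ⊆ f') :
    H.IsFracIndep (H.verts.indicator μ) := by
  refine ⟨fun v => ?_, fun v hv => Set.indicator_of_notMem hv μ, fun f hf => ?_⟩
  · by_cases hv : v ∈ H.verts
    · simpa [hv] using hμ.1 v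
    · simp [hv]
  · obtain ⟨f', hf', hff'⟩ := hedges f hf
    calc ∑ᶠ v ∈ f, H.verts.indicator μ v = ∑ᶠ v ∈ f, μ v :=
          finsum_mem_congr rfl fun v hv => Set.indicator_of_mem (H.edge_subset f hf hv) μ
      _ ≤ ∑ᶠ v ∈ f', μ v :=
          finsum_mem_le_finsum_mem_of_subset (fun v => (hμ.1 v).1) hff' (Set.toFinite _)
      _ ≤ 1 := hμ.2.2 f' hf'

lemma bddAbove_muWidth_fracIndep (H : Hgraph V) :
    BddAbove {w | ∃ μ : V → ℝ, H.IsFracIndep μ ∧ H.muWidth μ = w} := by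
  refine ⟨H.verts.ncard, ?_⟩
  rintro _ ⟨μ, hμ, rfl⟩
  refine (muWidth_le (fun v => (hμ.1 v).1) (TreeDecomp.oneBag H)).trans ?_
  exact TreeDecomp.muWidth_le_of_forall _ fun _ =>
    finsum_mem_le_ncard (Set.toFinite _) fun v _ => (hμ.1 v).2

lemma muWidth_le_adaptiveWidth (hμ : H.IsFracIndep μ) : H.muWidth μ ≤ H.adaptiveWidth :=
  le_csSup (bddAbove_muWidth_fracIndep H) ⟨μ, hμ, rfl⟩

lemma isFracIndep_single [DecidableEq V] {u : V} (hu : u ∈ H.verts) :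
    H.IsFracIndep (Pi.single u 1) := by
  have hμ0 : (0 : V → ℝ) ≤ Pi.single u 1 := Pi.single_nonneg.2 zero_le_one
  refine ⟨fun v => ⟨hμ0 v, ?_⟩,
    fun v hv => Pi.single_eq_of_ne (ne_of_mem_of_not_mem hu hv).symm _, fun f _ => ?_⟩
  · by_cases h : v = u <;> simp [h]
  calc ∑ᶠ v ∈ f, (Pi.single u 1 : V → ℝ) v
      ≤ ∑ᶠ v ∈ Set.univ, (Pi.single u 1 : V → ℝ) v :=
        finsum_mem_le_finsum_mem_of_subset hμ0 (Set.subset_univ f) (Set.toFinite _)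
    _ = 1 := by
        rw [finsum_mem_univ, finsum_eq_single _ u fun v hv => Pi.single_eq_of_ne hv _]
        exact Pi.single_eq_same u 1

lemma one_le_adaptiveWidth (hne : H.verts.Nonempty) : 1 ≤ H.adaptiveWidth := by
  classical
  obtain ⟨u, hu⟩ := hne
  refine le_trans (le_muWidth fun td => ?_) (muWidth_le_adaptiveWidth (isFracIndep_single hu))
  obtain ⟨t, ht⟩ := td.verts_covered u hu
  calc (1 : ℝ) = ∑ᶠ v ∈ ({u} : Set V), (Pi.single u 1 : V → ℝ) v := by simp
    _ ≤ ∑ᶠ v ∈ td.bag t, (Pi.single u 1 : V → ℝ) v :=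
        finsum_mem_le_finsum_mem_of_subset (Pi.single_nonneg.2 zero_le_one)
          (Set.singleton_subset_iff.2 ht) (Set.toFinite _)
    _ ≤ td.muWidth (Pi.single u 1) := td.sum_bag_le_muWidth _ t

end Finite

section extendEdge

variable {e : Set V} {he : e ∈ H.edges} {v' : V}

lemma muWidth_extendEdge_le (hv' : v' ∉ H.verts) (hμ : ∀ v, 0 ≤ μ v) :
    (H.extendEdge e he v').muWidth μ ≤ max (H.muWidth μ) (∑ᶠ v ∈ insert v' e, μ v) := by
  by_contra! hlt
  obtain ⟨td, htd⟩ := exists_muWidth_lt ((le_max_left _ _).trans_lt hlt)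
  obtain ⟨t₀, ht₀⟩ := td.edges_covered e he
  have hverts : (H.extendEdge e he v').verts = H.verts ∪ insert v' e := by
    rw [Set.union_insert, Set.union_eq_left.2 (H.edge_subset e he)]
    rfl
  have hedges : ∀ f ∈ (H.extendEdge e he v').edges, f ∈ H.edges ∨ f ⊆ insert v' e := by
    rintro f (⟨hf, -⟩ | rfl)
    exacts [Or.inl hf, Or.inr subset_rfl]
  have hsep : insert v' e ∩ H.verts ⊆ td.bag t₀ := by
    rintro v ⟨rfl | hv, hvH⟩
    exacts [absurd hvH hv', ht₀ hv]
  have hle := (muWidth_le hμ (td.attachLeaf t₀ _ hverts hedges hsep)).trans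
    (td.muWidth_attachLeaf_le t₀ _ hverts hedges hsep μ)
  exact (hle.trans_lt (max_lt htd ((le_max_right _ _).trans_lt hlt))).false

variable [Finite V] in
lemma IsFracIndep.indicator_of_extendEdge
    (hμ : (H.extendEdge e he v').IsFracIndep μ) : H.IsFracIndep (H.verts.indicator μ) := by
  refine hμ.indicator_verts fun f hf => ?_
  by_cases hfe : f = e
  · exact ⟨insert v' e, Or.inr rfl, hfe ▸ Set.subset_insert v' e⟩
  · exact ⟨f, Or.inl ⟨hf, hfe⟩, subset_rfl⟩

end extendEdge

end Hgraph

theorem stmt12 {V : Type} [Fintype V] (H : Hgraph V)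
    (e : Set V) (he : e ∈ H.edges) (v' : V) (hv' : v' ∉ H.verts) :
    (H.extendEdge e he v').adaptiveWidth ≤ H.adaptiveWidth := by
  have h1 : 1 ≤ H.adaptiveWidth :=
    Hgraph.one_le_adaptiveWidth ((H.edge_nonempty e he).mono (H.edge_subset e he))
  refine Real.sSup_le ?_ (zero_le_one.trans h1)
  rintro _ ⟨μ, hμ, rfl⟩
  calc (H.extendEdge e he v').muWidth μ
      ≤ max (H.muWidth μ) (∑ᶠ v ∈ insert v' e, μ v) :=
        Hgraph.muWidth_extendEdge_le hv' fun v => (hμ.1 v).1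
    _ = max (H.muWidth (H.verts.indicator μ)) (∑ᶠ v ∈ insert v' e, μ v) := by
        rw [Hgraph.muWidth_congr (Set.eqOn_indicator (f := μ)).symm]
    _ ≤ max H.adaptiveWidth 1 :=
        max_le_max (Hgraph.muWidth_le_adaptiveWidth hμ.indicator_of_extendEdge)
          (hμ.2.2 _ (Or.inr rfl))
    _ = H.adaptiveWidth := max_eq_left h1
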